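/- (Compatibility of the gl(n|m) dynamical equations, Theorem 1, first part.) For any z_1,…,z_k ∈ ℂ and any pairwise distinct λ_1,…,λ_N ∈ ℂ, the dynamical connection matrices A_a := ∑_{j=1}^k z_j e^{(j)}_{aa} + ∑_{b ≠ a} (−1)^{p(b)} (E_{ab}E_{ba} − E_{aa})/(λ_a − λ_b), a = 1,…,N, commute pairwise: [A_a, A_b] = 0 for all a, b. Together with the identity (−1)^{p(a)}(E_{ba}E_{ab}−E_{bb}) = (−1)^{p(b)}(E_{ab}E_{ba}−E_{aa}), this is the flatness of the system of operators κ∂_{λ_a} − A_a. -/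

import Mathlib

open Finset

namespace Glnm

/-- Parity: `p(a) = 0` for bosonic indices (`a ≤ n` in 1-based terms, i.e. `a.val < n`),
`p(a) = 1` for fermionic ones. -/
def par (n N : ℕ) (a : Fin N) : ℕ := if (a : ℕ) < n then 0 else 1

/-- The Koszul-sign realization `e^{(j)}_{ab} = σ^{p(a)+p(b)} ⊗ ⋯ ⊗ σ^{p(a)+p(b)} ⊗ e_{ab} ⊗ I ⊗ ⋯ ⊗ I`
on `(ℂ^N)^{⊗k}`, realized as matrices indexed by tuples `Fin k → Fin N`. -/
noncomputable def eop (n N k : ℕ) (j : Fin k) (a b : Fin N) :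
    Matrix (Fin k → Fin N) (Fin k → Fin N) ℂ :=
  fun x y =>
    (if x j = a ∧ y j = b then (1 : ℂ) else 0) *
      (-1 : ℂ) ^ ((par n N a + par n N b) *
        ∑ l ∈ Finset.univ.filter (fun l : Fin k => l < j), par n N (x l)) *
      ∏ l ∈ Finset.univ.filter (fun l : Fin k => l ≠ j),
        (if x l = y l then (1 : ℂ) else 0)

/-- `E_{ab} = ∑_{j=1}^k e^{(j)}_{ab}`. -/
noncomputable def Egen (n N k : ℕ) (a b : Fin N) : Matrix (Fin k → Fin N) (Fin k → Fin N) ℂ :=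
  ∑ j : Fin k, eop n N k j a b

/-- The graded permutation `P_{ij} = ∑_{a,b} (−1)^{p(b)} e^{(i)}_{ab} e^{(j)}_{ba}`. -/
noncomputable def Pg (n N k : ℕ) (i j : Fin k) : Matrix (Fin k → Fin N) (Fin k → Fin N) ℂ :=
  ∑ a : Fin N, ∑ b : Fin N,
    ((-1 : ℂ) ^ par n N b) • (eop n N k i a b * eop n N k j b a)

/-- Commutator. -/
def comm {α : Type*} [Ring α] (X Y : α) : α := X * Y - Y * X

/-- Anticommutator. -/
def acomm {α : Type*} [Ring α] (X Y : α) : α := X * Y + Y * X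

/-- The dynamical connection matrix
`A_a = ∑_j z_j e^{(j)}_{aa} + ∑_{b ≠ a} (−1)^{p(b)} (E_{ab}E_{ba} − E_{aa})/(λ_a − λ_b)`. -/
noncomputable def dynA (n N k : ℕ) (z : Fin k → ℂ) (lam : Fin N → ℂ) (a : Fin N) :
    Matrix (Fin k → Fin N) (Fin k → Fin N) ℂ :=
  (∑ j : Fin k, z j • eop n N k j a a) +
    ∑ b ∈ Finset.univ.filter (fun b : Fin N => b ≠ a),
      (((-1 : ℂ) ^ par n N b) / (lam a - lam b)) •
        (Egen n N k a b * Egen n N k b a - Egen n N k a a)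

/-- The (twisted) KZ connection matrix
`B_i = ∑_c λ_c e^{(i)}_{cc} + ∑_{j ≠ i} P_{ij}/(z_i − z_j)`. -/
noncomputable def kzB (n N k : ℕ) (z : Fin k → ℂ) (lam : Fin N → ℂ) (i : Fin k) :
    Matrix (Fin k → Fin N) (Fin k → Fin N) ℂ :=
  (∑ c : Fin N, lam c • eop n N k i c c) +
    ∑ j ∈ Finset.univ.filter (fun j : Fin k => j ≠ i),
      ((z i - z j)⁻¹) • Pg n N k i j

/-- Adjacent graded permutation `P_{s_l} = P_{l,l+1}` (0-based slots). -/
noncomputable def Ps (n N k : ℕ) (l : ℕ) (h : l + 1 < k) :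
    Matrix (Fin k → Fin N) (Fin k → Fin N) ℂ :=
  Pg n N k ⟨l, Nat.lt_of_succ_lt h⟩ ⟨l + 1, h⟩

/-- The highest-configuration vector `e_1 ⊗ ⋯ ⊗ e_N ∈ (ℂ^N)^{⊗N}`. -/
noncomputable def baseVec (N : ℕ) : (Fin N → Fin N) → ℂ :=
  fun x => if x = (fun j => j) then 1 else 0

/-- `Ω^i = ∑_{σ ∈ S_N} (−1)^{i·ℓ(σ)} P_σ (e_1 ⊗ ⋯ ⊗ e_N)`, where `P_σ = ρ σ` for the
(unique) multiplicative extension `ρ` of the adjacent graded permutations. -/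
noncomputable def OmegaVec (N : ℕ) (i : ℕ)
    (ρ : Equiv.Perm (Fin N) →* Matrix (Fin N → Fin N) (Fin N → Fin N) ℂ) :
    (Fin N → Fin N) → ℂ :=
  ∑ σ : Equiv.Perm (Fin N),
    (((Equiv.Perm.sign σ : ℤ) : ℂ) ^ i) • Matrix.mulVec (ρ σ) (baseVec N)

/-- The set of `(z, λ)` with pairwise distinct `z`'s and pairwise distinct `λ`'s. -/
def Usep (N : ℕ) : Set ((Fin N → ℂ) × (Fin N → ℂ)) :=
  {p | (∀ i j : Fin N, i ≠ j → p.1 i ≠ p.1 j) ∧ (∀ a b : Fin N, a ≠ b → p.2 a ≠ p.2 b)}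

end Glnm

/-!
Write `A_a = D_a + ∑_c X_ac / (λ_a - λ_c)` with `D_a = ∑_j z_j e^{(j)}_aa` and
`X_ab = (-1)^{p(b)} (E_ab E_ba - E_aa)`. Commutativity then only needs the infinitesimal braid
relations for `X` (`X_ab = X_ba`, `[X_ab, X_cd] = 0` for disjoint pairs, `[X_ab, X_ac + X_bc] = 0`)
and `[D_a, D_b] = 0`, `[D_c, X_ab] = 0` for `c ∉ {a, b}`, `[D_a + D_b, X_ab] = 0`: in the double
sum of `[A_a, A_b]` the surviving terms are grouped into triangles `{a, b, c}`, each of which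
vanishes by the partial fraction identity for `1 / ((λ_a - λ_b)(λ_b - λ_c))`.

The braid relations hold for any family satisfying the `gl(n|m)` supercommutation relations:
`X_ab` commutes with the Casimir-type element `∑_{i,j ∈ {a,b,c}} X_ij` of `gl({a,b,c})`, which is
`2 (X_ab + X_ac + X_bc)` plus diagonal terms of weight zero. The operators `E_ab = ∑_j e^{(j)}_ab`
satisfy these relations because each tensor slot carries matrix units and the Koszul signs make
distinct slots supercommute.
-/

namespace Glnm

attribute [local instance] LieRing.ofAssociativeRing

lemma neg_one_pow_eq_of_even_add {x y : ℕ} (h : Even (x + y)) : (-1 : ℂ) ^ x = (-1) ^ y := by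
  rw [neg_one_pow_eq_pow_mod_two, neg_one_pow_eq_pow_mod_two (n := y)]
  rw [Nat.even_add, Nat.even_iff, Nat.even_iff] at h
  congr 1
  omega

section Gaudin

variable {ι R : Type*} [Ring R] [Algebra ℂ R]

structure IsInfBraid (X : ι → ι → R) : Prop where
  symm : ∀ a b, X a b = X b a
  commute_of_disjoint : ∀ {a b c d}, a ≠ c → a ≠ d → b ≠ c → b ≠ d → Commute (X a b) (X c d)
  commute_add : ∀ {a b c}, a ≠ b → a ≠ c → b ≠ c → Commute (X a b) (X a c + X b c)

variable {X : ι → ι → R} {lam : ι → ℂ}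

namespace IsInfBraid

lemma triangle_lie_sum_eq_zero (hX : IsInfBraid X) (hlam : Function.Injective lam) {a b : ι}
    (hab : a ≠ b) (c : ι) :
    ((lam b - lam c)⁻¹ * (lam a - lam b)⁻¹) • ⁅X a b, X b c⁆ +
      ((lam b - lam a)⁻¹ * (lam a - lam c)⁻¹) • ⁅X a c, X b a⁆ +
      ((lam b - lam c)⁻¹ * (lam a - lam c)⁻¹) • ⁅X a c, X b c⁆ = 0 := by
  have hba : ⁅X a b, X b a⁆ = 0 := by rw [hX.symm b a, lie_self]
  rcases eq_or_ne c a with rfl | hca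
  · simp [hba]
  rcases eq_or_ne c b with rfl | hcb
  · simp [hba]
  have h₁ : ⁅X a c, X a b⁆ = ⁅X a b, X b c⁆ := by
    have h := hX.commute_add hab hca.symm hcb.symm
    rw [commute_iff_lie_eq, lie_add, add_eq_zero_iff_eq_neg] at h
    rw [← lie_skew, h, neg_neg]
  have h₂ : ⁅X a c, X b c⁆ = -⁅X a b, X b c⁆ := by
    have h := hX.commute_add hca.symm hab hcb
    rw [commute_iff_lie_eq, lie_add, add_eq_zero_iff_eq_neg', h₁, hX.symm c b] at h
    exact h
  have hscalar : (lam b - lam c)⁻¹ * (lam a - lam b)⁻¹ + (lam b - lam a)⁻¹ * (lam a - lam c)⁻¹ -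
      (lam b - lam c)⁻¹ * (lam a - lam c)⁻¹ = 0 := by
    have := sub_ne_zero.2 (hlam.ne hab)
    have := sub_ne_zero.2 (hlam.ne hab.symm)
    have := sub_ne_zero.2 (hlam.ne hca.symm)
    have := sub_ne_zero.2 (hlam.ne hcb.symm)
    field_simp
    ring
  rw [hX.symm b a, h₁, h₂, smul_neg, ← sub_eq_add_neg, ← add_smul, ← sub_smul, hscalar, zero_smul]

lemma commute_gaudin [Fintype ι] [DecidableEq ι] (hX : IsInfBraid X)
    (hlam : Function.Injective lam) (a b : ι) :
    Commute (∑ c, (lam a - lam c)⁻¹ • X a c) (∑ d, (lam b - lam d)⁻¹ • X b d) := by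
  rcases eq_or_ne a b with rfl | hab
  · exact Commute.refl _
  set g : ι → ι → R := fun c d => ((lam b - lam d)⁻¹ * (lam a - lam c)⁻¹) • ⁅X a c, X b d⁆ with hg
  have hzero_left : ∀ d, g a d = 0 := by simp [hg]
  have hzero_right : ∀ c, g c b = 0 := by simp [hg]
  have hba : g b a = 0 := by simp [hg, hX.symm b a]
  -- `g c d` can only be nonzero when `{a, c}` meets `{b, d}`
  have hsupport : ∀ c d, g c d =
      (if c = b then g b d else 0) + (if d = a then g c a else 0) +
        (if c = d then g c c else 0) := by
    intro c d
    by_cases hcb : c = b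
    · rw [hcb, if_pos rfl, hba, hzero_right, ite_self, ite_self, add_zero, add_zero]
    rw [if_neg hcb, zero_add]
    by_cases hda : d = a
    · by_cases hca : c = a
      · rw [if_pos hda, hda, if_pos hca, hca, hzero_left, add_zero]
      · rw [if_pos hda, hda, if_neg hca, add_zero]
    rw [if_neg hda, zero_add]
    by_cases hcd : c = d
    · rw [if_pos hcd, hcd]
    rw [if_neg hcd]
    by_cases hca : c = a
    · rw [hca, hzero_left]
    by_cases hdb : d = b
    · rw [hdb, hzero_right]
    simp only [hg, commute_iff_lie_eq.1 (hX.commute_of_disjoint hab (Ne.symm hda) hcb hcd),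
      smul_zero]
  rw [commute_iff_lie_eq, sum_lie]
  simp only [smul_lie, lie_sum, lie_smul, smul_smul]
  change ∑ c, ∑ d, g c d = 0
  rw [Finset.sum_congr rfl fun c _ => Finset.sum_congr rfl fun d _ => hsupport c d]
  simp only [Finset.sum_add_distrib, Finset.sum_ite_irrel,
    Finset.sum_const_zero, Finset.sum_ite_eq', Finset.sum_ite_eq, Finset.mem_univ, if_true]
  rw [← Finset.sum_add_distrib, ← Finset.sum_add_distrib]
  exact Finset.sum_eq_zero fun c _ => hX.triangle_lie_sum_eq_zero hlam hab c

lemma commute_add_gaudin [Fintype ι] [DecidableEq ι] (hX : IsInfBraid X)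
    (hlam : Function.Injective lam) {D : ι → R} (hD : ∀ a b, Commute (D a) (D b))
    (hDX : ∀ {a b c}, c ≠ a → c ≠ b → Commute (D c) (X a b))
    (hDX₂ : ∀ {a b}, a ≠ b → Commute (D a + D b) (X a b)) (a b : ι) :
    Commute (D a + ∑ c, (lam a - lam c)⁻¹ • X a c) (D b + ∑ d, (lam b - lam d)⁻¹ • X b d) := by
  rcases eq_or_ne a b with rfl | hab
  · exact Commute.refl _
  have hleft : ⁅D a, ∑ d, (lam b - lam d)⁻¹ • X b d⁆ = (lam b - lam a)⁻¹ • ⁅D a, X a b⁆ := by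
    rw [lie_sum, Fintype.sum_eq_single a, lie_smul, hX.symm]
    intro d hda
    rcases eq_or_ne d b with rfl | hdb
    · rw [sub_self, inv_zero, zero_smul, lie_zero]
    · rw [lie_smul, commute_iff_lie_eq.1 (hDX hab hda.symm), smul_zero]
  have hright : ⁅∑ c, (lam a - lam c)⁻¹ • X a c, D b⁆ = -(lam a - lam b)⁻¹ • ⁅D b, X a b⁆ := by
    rw [sum_lie, Fintype.sum_eq_single b, smul_lie, ← lie_skew, neg_smul, smul_neg]
    intro c hcb
    rcases eq_or_ne c a with rfl | hca
    · rw [sub_self, inv_zero, zero_smul, zero_lie]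
    · rw [smul_lie, ← lie_skew, commute_iff_lie_eq.1 (hDX hab.symm hcb.symm), neg_zero, smul_zero]
  rw [commute_iff_lie_eq, add_lie, lie_add, lie_add, hleft, hright,
    commute_iff_lie_eq.1 (hD a b), commute_iff_lie_eq.1 (hX.commute_gaudin hlam a b),
    ← neg_sub (lam a), inv_neg, zero_add, add_zero, ← smul_add, ← add_lie,
    commute_iff_lie_eq.1 (hDX₂ hab), smul_zero]

end IsInfBraid
end Gaudin

section SuperGl

variable {ι R : Type*} [Ring R] [Algebra ℂ R]

def superSign (p : ι → ℕ) (a b c d : ι) : ℂ := (-1) ^ ((p a + p b) * (p c + p d))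

variable (p : ι → ℕ)

lemma superSign_mul_self (a b c d : ι) : superSign p a b c d * superSign p a b c d = 1 := by
  rw [superSign, ← pow_add, ← two_mul, pow_mul, neg_one_sq, one_pow]

lemma superSign_self_left (a c d : ι) : superSign p a a c d = 1 :=
  Even.neg_one_pow (by simp [parity_simps])

lemma superSign_swap_left (a b c d : ι) : superSign p b a c d = superSign p a b c d := by
  rw [superSign, superSign, add_comm (p b)]

lemma superSign_swap_right (a b c d : ι) : superSign p a b d c = superSign p a b c d := by
  rw [superSign, superSign, add_comm (p d)]

lemma neg_one_pow_mul_superSign_self (a b : ι) :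
    (-1) ^ p b * superSign p a b b a = (-1) ^ p a := by
  rw [superSign, ← pow_add]
  exact neg_one_pow_eq_of_even_add (by simp [parity_simps]; tauto)

lemma neg_one_pow_mul_superSign_casimir (k l i : ι) :
    (-1) ^ p l * superSign p k l i l = (-1) ^ p k * superSign p k l i k := by
  rw [superSign, superSign, ← pow_add, ← pow_add]
  exact neg_one_pow_eq_of_even_add (by simp [parity_simps]; tauto)

/-- The operator `X_ab` of the dynamical connection. -/
def pairOp (E : ι → ι → R) (a b : ι) : R := (-1 : ℂ) ^ p b • (E a b * E b a - E a a)

variable {p}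

lemma commute_pairOp_of_commute {E : ι → ι → R} {Y : R} {a b : ι} (hab : Commute Y (E a b))
    (hba : Commute Y (E b a)) (haa : Commute Y (E a a)) : Commute Y (pairOp p E a b) :=
  ((hab.mul_right hba).sub_right haa).smul_right _

lemma commute_mul_of_lie_eq_smul {h x y : R} {α : ℂ} (hx : ⁅h, x⁆ = α • x) (hy : ⁅h, y⁆ = -α • y) :
    Commute h (x * y) := by
  rw [Ring.lie_def, sub_eq_iff_eq_add] at hx hy
  rw [Commute, SemiconjBy, ← mul_assoc, hx, add_mul, mul_assoc, hy, mul_add, ← mul_assoc,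
    smul_mul_assoc, mul_smul_comm, neg_smul]
  abel

lemma commute_mul_of_mul_eq_smul {x y z : R} {s : ℂ} (hs : s * s = 1) (hx : x * z = s • (z * x))
    (hy : y * z = s • (z * y)) : Commute (x * y) z := by
  rw [Commute, SemiconjBy, mul_assoc, hy, mul_smul_comm, ← mul_assoc, hx, smul_mul_assoc, smul_smul,
    hs, one_smul, mul_assoc]

variable [DecidableEq ι]

variable (p) in
/-- `[E_ab, E_cd} = δ_bc E_ad - (-1)^{(p(a)+p(b))(p(c)+p(d))} δ_da E_cb`, solved for `E_ab E_cd`. -/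
def IsSuperGl (E : ι → ι → R) : Prop :=
  ∀ a b c d, E a b * E c d =
    (if b = c then E a d else 0) +
      superSign p a b c d • (E c d * E a b - if d = a then E c b else 0)

variable (p) in
/-- Differs from the quadratic Casimir `∑ (-1)^{p(j)} E_ij E_ji` of `gl(S)` by a multiple of the
central element `∑_{i ∈ S} E_ii`. -/
def casimir (E : ι → ι → R) (S : Finset ι) : R := ∑ i ∈ S, ∑ j ∈ S, pairOp p E i j

namespace IsSuperGl

variable {E : ι → ι → R}

lemma mul_of_ne (hE : IsSuperGl p E) {a b c d : ι} (hbc : b ≠ c) (hda : d ≠ a) :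
    E a b * E c d = superSign p a b c d • (E c d * E a b) := by
  simpa [hbc, hda] using hE a b c d

lemma lie_diag (hE : IsSuperGl p E) (i a b : ι) :
    ⁅E i i, E a b⁆ = ((if i = a then 1 else 0) - (if i = b then 1 else 0) : ℂ) • E a b := by
  have h := hE i i a b
  rw [superSign_self_left, one_smul] at h
  rw [Ring.lie_def, h]
  by_cases hia : i = a <;> by_cases hib : i = b <;> subst_vars <;> simp_all [eq_comm]

lemma commute_diag_mul (hE : IsSuperGl p E) (i a b : ι) : Commute (E i i) (E a b * E b a) :=
  commute_mul_of_lie_eq_smul (hE.lie_diag i a b) (by rw [hE.lie_diag, neg_sub])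

lemma commute_diag_pairOp (hE : IsSuperGl p E) (i a b : ι) : Commute (E i i) (pairOp p E a b) := by
  refine ((hE.commute_diag_mul i a b).sub_right ?_).smul_right _
  rw [commute_iff_lie_eq, hE.lie_diag, sub_self, zero_smul]

lemma commute_pairOp_diag_pairOp (hE : IsSuperGl p E) (i a b : ι) :
    Commute (pairOp p E i i) (pairOp p E a b) :=
  have h := hE.commute_diag_pairOp i a b
  ((h.mul_left h).sub_left h).smul_left _

lemma pairOp_symm (hE : IsSuperGl p E) (a b : ι) : pairOp p E a b = pairOp p E b a := by
  rcases eq_or_ne a b with rfl | hab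
  · rfl
  have h := hE a b b a
  simp only [if_true] at h
  rw [pairOp, pairOp, h, add_sub_cancel_left, smul_smul, neg_one_pow_mul_superSign_self]

lemma commute_pairOp_of_ne (hE : IsSuperGl p E) {a b u v : ι} (hua : u ≠ a) (hub : u ≠ b)
    (hva : v ≠ a) (hvb : v ≠ b) : Commute (pairOp p E a b) (E u v) := by
  refine (Commute.sub_left ?_ ?_).smul_left _
  · refine commute_mul_of_mul_eq_smul (superSign_mul_self p a b u v)
      (hE.mul_of_ne hub.symm hva) ?_
    rw [hE.mul_of_ne hua.symm hvb, superSign_swap_left]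
  · rw [Commute, SemiconjBy, hE.mul_of_ne hua.symm hva, superSign_self_left, one_smul]

lemma commute_pairOp_of_disjoint (hE : IsSuperGl p E) {a b c d : ι} (hac : a ≠ c) (had : a ≠ d)
    (hbc : b ≠ c) (hbd : b ≠ d) : Commute (pairOp p E a b) (pairOp p E c d) :=
  commute_pairOp_of_commute (hE.commute_pairOp_of_ne hac.symm hbc.symm had.symm hbd.symm)
    (hE.commute_pairOp_of_ne had.symm hbd.symm hac.symm hbc.symm)
    (hE.commute_pairOp_of_ne hac.symm hbc.symm hac.symm hbc.symm)

lemma lie_mul_mul (hE : IsSuperGl p E) (k l i j : ι) :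
    ⁅E k l, E i j * E j i⁆ =
      (if l = i then E k j * E j i else 0) - (if i = k then E i j * E j l else 0) +
        superSign p k l i j • ((if l = j then E i j * E k i else 0) -
          (if j = k then E i l * E j i else 0)) := by
  have h := hE k l j i
  rw [superSign_swap_right] at h
  rw [Ring.lie_def, ← mul_assoc, hE k l i j]
  simp only [add_mul, sub_mul, smul_mul_assoc, mul_assoc, h, mul_add, mul_sub, mul_smul_comm,
    smul_add, smul_sub, smul_smul, superSign_mul_self, one_smul, ite_mul, mul_ite, zero_mul,
    mul_zero]
  abel

lemma lie_sum_diag (hE : IsSuperGl p E) {S : Finset ι} {k l : ι} (hk : k ∈ S) (hl : l ∈ S) :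
    ⁅∑ i ∈ S, E i i, E k l⁆ = 0 := by
  simp [sum_lie, hE.lie_diag, ← Finset.sum_smul, Finset.sum_sub_distrib, hk, hl]

lemma commute_casimir (hE : IsSuperGl p E) {S : Finset ι} {k l : ι} (hk : k ∈ S) (hl : l ∈ S) :
    Commute (E k l) (casimir p E S) := by
  have hquad : ∑ i ∈ S, ∑ j ∈ S, (-1 : ℂ) ^ p j • ⁅E k l, E i j * E j i⁆ = 0 := by
    simp only [hE.lie_mul_mul, smul_add, smul_sub, smul_smul, smul_ite, smul_zero,
      Finset.sum_add_distrib, Finset.sum_sub_distrib, Finset.sum_ite_irrel, Finset.sum_const_zero,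
      Finset.sum_ite_eq, Finset.sum_ite_eq', hk, hl, if_true, neg_one_pow_mul_superSign_casimir]
    abel
  have hlin : ∑ i ∈ S, ∑ j ∈ S, (-1 : ℂ) ^ p j • ⁅E k l, E i i⁆ = 0 := by
    have hcentral : ⁅E k l, ∑ i ∈ S, E i i⁆ = 0 := by
      rw [← lie_skew, hE.lie_sum_diag hk hl, neg_zero]
    rw [Finset.sum_comm]
    simp only [← Finset.smul_sum, ← lie_sum, hcentral, smul_zero, Finset.sum_const_zero]
  rw [commute_iff_lie_eq, casimir]
  simp only [lie_sum, pairOp, lie_smul, lie_sub, smul_sub, Finset.sum_sub_distrib, hquad, hlin,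
    sub_zero]

lemma casimir_triple (hE : IsSuperGl p E) {a b c : ι} (hab : a ≠ b) (hac : a ≠ c) (hbc : b ≠ c) :
    casimir p E {a, b, c} = pairOp p E a a + pairOp p E b b + pairOp p E c c +
      (2 : ℂ) • (pairOp p E a b + pairOp p E a c + pairOp p E b c) := by
  simp only [casimir, Finset.sum_insert (show a ∉ ({b, c} : Finset ι) by simp [hab, hac]),
    Finset.sum_pair hbc, hE.pairOp_symm b a, hE.pairOp_symm c a, hE.pairOp_symm c b]
  module

lemma commute_pairOp_add_pairOp (hE : IsSuperGl p E) {a b c : ι} (hab : a ≠ b) (hac : a ≠ c)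
    (hbc : b ≠ c) : Commute (pairOp p E a b) (pairOp p E a c + pairOp p E b c) := by
  have ha : a ∈ ({a, b, c} : Finset ι) := by simp
  have hb : b ∈ ({a, b, c} : Finset ι) := by simp
  have hcas : Commute (pairOp p E a b) (casimir p E {a, b, c}) :=
    (commute_pairOp_of_commute (hE.commute_casimir ha hb).symm (hE.commute_casimir hb ha).symm
      (hE.commute_casimir ha ha).symm).symm
  have hsplit : pairOp p E a c + pairOp p E b c = (2 : ℂ)⁻¹ • (casimir p E {a, b, c} -
      (pairOp p E a a + pairOp p E b b + pairOp p E c c + (2 : ℂ) • pairOp p E a b)) := by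
    rw [hE.casimir_triple hab hac hbc]
    module
  rw [hsplit]
  refine (hcas.sub_right ?_).smul_right _
  exact (((hE.commute_pairOp_diag_pairOp a a b).symm.add_right
    (hE.commute_pairOp_diag_pairOp b a b).symm).add_right
      (hE.commute_pairOp_diag_pairOp c a b).symm).add_right ((Commute.refl _).smul_right _)

lemma isInfBraid_pairOp (hE : IsSuperGl p E) : IsInfBraid (pairOp p E) :=
  ⟨hE.pairOp_symm, hE.commute_pairOp_of_disjoint, hE.commute_pairOp_add_pairOp⟩

end IsSuperGl
end SuperGl

section KoszulUnits

variable {κ ι R : Type*} [Ring R] [Algebra ℂ R] [DecidableEq ι]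

structure IsKoszulUnits (p : ι → ℕ) (e : κ → ι → ι → R) : Prop where
  mul_self : ∀ j a b c d, e j a b * e j c d = if b = c then e j a d else 0
  mul_of_ne : ∀ {i j}, i ≠ j → ∀ a b c d,
    e i a b * e j c d = superSign p a b c d • (e j c d * e i a b)

variable {p : ι → ℕ} {e : κ → ι → ι → R}

def diagOp [Fintype κ] (z : κ → ℂ) (e : κ → ι → ι → R) (a : ι) : R := ∑ j, z j • e j a a

namespace IsKoszulUnits

lemma commute_sum_diag (he : IsKoszulUnits p e) (T : Finset ι) (j i : κ) {u v : ι}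
    (huv : u ∈ T ↔ v ∈ T) : Commute (∑ c ∈ T, e j c c) (e i u v) := by
  rcases eq_or_ne j i with rfl | hji
  · rw [Commute, SemiconjBy, Finset.sum_mul, Finset.mul_sum]
    simp only [he.mul_self, Finset.sum_ite_eq, Finset.sum_ite_eq', huv]
  · exact Commute.sum_left _ _ _ fun c _ => by
      rw [Commute, SemiconjBy, he.mul_of_ne hji, superSign_self_left, one_smul]

variable [Fintype κ]

lemma sum_mul_sum [DecidableEq κ] (he : IsKoszulUnits p e) (a b c d : ι) :
    (∑ i, e i a b) * (∑ j, e j c d) =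
      (if b = c then ∑ i, e i a d else 0) + ∑ i, ∑ j ∈ Finset.univ.erase i, e i a b * e j c d := by
  have hdiag : (if b = c then ∑ i, e i a d else 0) = ∑ i, e i a b * e i c d := by
    simp only [he.mul_self, Finset.sum_ite_irrel, Finset.sum_const_zero]
  rw [Finset.sum_mul_sum, hdiag, ← Finset.sum_add_distrib]
  exact Finset.sum_congr rfl fun i _ => (Finset.add_sum_erase _ _ (Finset.mem_univ i)).symm

lemma isSuperGl_sum [DecidableEq κ] (he : IsKoszulUnits p e) :
    IsSuperGl p (fun a b => ∑ j, e j a b) := by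
  intro a b c d
  have hswap : ∑ i, ∑ j ∈ Finset.univ.erase i, e i a b * e j c d =
      superSign p a b c d • ∑ i, ∑ j ∈ Finset.univ.erase i, e i c d * e j a b := by
    rw [Finset.smul_sum, Finset.sum_comm' (t' := Finset.univ) (s' := fun j => Finset.univ.erase j)]
    · refine Finset.sum_congr rfl fun j _ => ?_
      rw [Finset.smul_sum]
      exact Finset.sum_congr rfl fun i hi => he.mul_of_ne (Finset.ne_of_mem_erase hi) a b c d
    · simp [eq_comm]
  simp only [he.sum_mul_sum, hswap, add_sub_cancel_left]

lemma commute_diagOp (he : IsKoszulUnits p e) (z : κ → ℂ) (a b : ι) :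
    Commute (diagOp z e a) (diagOp z e b) :=
  Commute.sum_left _ _ _ fun j _ => (Commute.sum_right _ _ _ fun i _ =>
    (show Commute (e j a a) (e i b b) by
      simpa using he.commute_sum_diag {a} j i (u := b) (v := b) Iff.rfl).smul_right _).smul_left _

lemma commute_diagOp_pairOp (he : IsKoszulUnits p e) (z : κ → ℂ) {a b c : ι} (hca : c ≠ a)
    (hcb : c ≠ b) : Commute (diagOp z e c) (pairOp p (fun a b => ∑ j, e j a b) a b) := by
  have h : ∀ j u v, u ≠ c → v ≠ c → Commute (e j c c) (∑ i, e i u v) := fun j u v hu hv =>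
    Commute.sum_right _ _ _ fun i _ => by
      simpa using he.commute_sum_diag {c} j i (u := u) (v := v) (by simp [hu, hv])
  exact Commute.sum_left _ _ _ fun j _ => (commute_pairOp_of_commute (h j a b hca.symm hcb.symm)
    (h j b a hcb.symm hca.symm) (h j a a hca.symm hca.symm)).smul_left _

lemma commute_diagOp_add_pairOp (he : IsKoszulUnits p e) (z : κ → ℂ) {a b : ι} (hab : a ≠ b) :
    Commute (diagOp z e a + diagOp z e b) (pairOp p (fun a b => ∑ j, e j a b) a b) := by
  have h : ∀ j u v, u ∈ ({a, b} : Finset ι) → v ∈ ({a, b} : Finset ι) →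
      Commute (∑ c ∈ {a, b}, e j c c) (∑ i, e i u v) := fun j u v hu hv =>
    Commute.sum_right _ _ _ fun i _ => he.commute_sum_diag _ j i (iff_of_true hu hv)
  rw [diagOp, diagOp, ← Finset.sum_add_distrib]
  refine Commute.sum_left _ _ _ fun j _ => ?_
  rw [← smul_add, ← Finset.sum_pair hab (f := fun c => e j c c)]
  exact (commute_pairOp_of_commute (h j a b (by simp) (by simp)) (h j b a (by simp) (by simp))
    (h j a a (by simp) (by simp))).smul_left _

end IsKoszulUnits
end KoszulUnits

section KoszulSigns

variable {n N k : ℕ}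

def parSum (n N k : ℕ) (j : Fin k) (x : Fin k → Fin N) : ℕ :=
  ∑ l ∈ Finset.univ.filter (fun l : Fin k => l < j), par n N (x l)

lemma parSum_update_of_not_lt {i j : Fin k} (hij : ¬ i < j) (x : Fin k → Fin N) (v : Fin N) :
    parSum n N k j (Function.update x i v) = parSum n N k j x :=
  Finset.sum_congr rfl fun l hl => by
    rw [Function.update_of_ne (by rintro rfl; exact hij (Finset.mem_filter.1 hl).2)]

lemma parSum_update_of_lt {i j : Fin k} (hij : i < j) (x : Fin k → Fin N) (v : Fin N) :
    parSum n N k j (Function.update x i v) + par n N (x i) = parSum n N k j x + par n N v := by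
  have hi : i ∈ Finset.univ.filter (fun l : Fin k => l < j) := by simp [hij]
  rw [parSum, parSum, ← Finset.add_sum_erase _ _ hi, ← Finset.add_sum_erase _ _ hi,
    Function.update_self, Finset.sum_congr rfl fun l hl => by
      rw [Function.update_of_ne (Finset.ne_of_mem_erase hl)]]
  ring

lemma neg_one_pow_parSum_update {i j : Fin k} (hij : i < j) (q : ℕ) (x : Fin k → Fin N)
    (v : Fin N) :
    (-1 : ℂ) ^ (q * parSum n N k j (Function.update x i v)) =
      (-1) ^ (q * (par n N (x i) + par n N v)) * (-1) ^ (q * parSum n N k j x) := by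
  rw [← pow_add]
  refine neg_one_pow_eq_of_even_add ⟨q * (parSum n N k j x + par n N v), ?_⟩
  have h := parSum_update_of_lt (n := n) hij x v
  linear_combination (q : ℕ) * h

lemma eop_apply (j : Fin k) (a b : Fin N) (x y : Fin k → Fin N) :
    eop n N k j a b x y = if x j = a ∧ y = Function.update x j b then
      (-1 : ℂ) ^ ((par n N a + par n N b) * parSum n N k j x) else 0 := by
  by_cases h : x j = a ∧ y = Function.update x j b
  · obtain ⟨hxa, rfl⟩ := h
    rw [if_pos ⟨hxa, rfl⟩, eop, if_pos ⟨hxa, Function.update_self ..⟩, one_mul, parSum,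
      Finset.prod_eq_one fun l hl => by rw [Function.update_of_ne (Finset.mem_filter.1 hl).2,
        if_pos rfl], mul_one]
  rw [if_neg h, eop]
  by_cases hxa : x j = a
  · obtain ⟨l, hl⟩ := Function.ne_iff.1 fun hy => h ⟨hxa, hy⟩
    rcases eq_or_ne l j with rfl | hlj
    · rw [if_neg fun h' => hl (by rw [h'.2, Function.update_self]), zero_mul, zero_mul]
    · rw [Finset.prod_eq_zero (i := l) (by simp [hlj]) (if_neg fun h' => hl (by
        rw [← h', Function.update_of_ne hlj])), mul_zero]
  · rw [if_neg fun h' => hxa h'.1, zero_mul, zero_mul]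

lemma eop_mul_apply (j : Fin k) (a b : Fin N) (M : Matrix (Fin k → Fin N) (Fin k → Fin N) ℂ)
    (x y : Fin k → Fin N) :
    (eop n N k j a b * M) x y = if x j = a then
      (-1 : ℂ) ^ ((par n N a + par n N b) * parSum n N k j x) * M (Function.update x j b) y
      else 0 := by
  simp [Matrix.mul_apply, eop_apply, ite_and, Finset.sum_ite_eq', ite_mul]

lemma eop_mul_eop_self (j : Fin k) (a b c d : Fin N) :
    eop n N k j a b * eop n N k j c d = if b = c then eop n N k j a d else 0 := by
  ext x y
  rw [eop_mul_apply, eop_apply, Function.update_self,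
    parSum_update_of_not_lt (lt_irrefl j), Function.update_idem]
  by_cases hbc : b = c
  · subst hbc
    rw [if_pos rfl, eop_apply]
    by_cases hxa : x j = a
    · by_cases hy : y = Function.update x j d
      · rw [if_pos hxa, if_pos ⟨rfl, hy⟩, if_pos ⟨hxa, hy⟩, ← pow_add]
        exact neg_one_pow_eq_of_even_add ⟨(par n N a + par n N b + par n N d) *
          parSum n N k j x, by ring⟩
      · simp [hy]
    · simp [hxa]
  · simp [hbc]

lemma eop_mul_eop_of_ne {i j : Fin k} (hij : i ≠ j) (a b c d : Fin N) :
    eop n N k i a b * eop n N k j c d =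
      superSign (par n N) a b c d • (eop n N k j c d * eop n N k i a b) := by
  ext x y
  rw [Matrix.smul_apply, eop_mul_apply, eop_mul_apply, eop_apply, eop_apply,
    Function.update_of_ne hij.symm, Function.update_of_ne hij, Function.update_comm hij]
  by_cases hxa : x i = a
  swap
  · simp [hxa]
  by_cases hxc : x j = c
  swap
  · simp [hxc]
  by_cases hy : y = Function.update (Function.update x j d) i b
  swap
  · simp [hy]
  simp only [hxa, hxc, hy, and_self, if_true, smul_eq_mul]
  rcases lt_or_gt_of_ne hij with hlt | hgt
  · rw [parSum_update_of_not_lt (not_lt_of_gt hlt), neg_one_pow_parSum_update hlt, hxa, superSign,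
      mul_comm (par n N c + par n N d)]
    ring
  · rw [parSum_update_of_not_lt (not_lt_of_gt hgt), neg_one_pow_parSum_update hgt, hxc,
      ← superSign]
    linear_combination -(-1 : ℂ) ^ ((par n N a + par n N b) * parSum n N k i x) *
      (-1 : ℂ) ^ ((par n N c + par n N d) * parSum n N k j x) * superSign_mul_self (par n N) a b c d

end KoszulSigns

lemma isKoszulUnits_eop (n N k : ℕ) : IsKoszulUnits (par n N) (eop n N k) :=
  ⟨eop_mul_eop_self, eop_mul_eop_of_ne⟩

lemma dynA_eq (n N k : ℕ) (z : Fin k → ℂ) (lam : Fin N → ℂ) (a : Fin N) :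
    dynA n N k z lam a =
      diagOp z (eop n N k) a + ∑ c, (lam a - lam c)⁻¹ • pairOp (par n N) (Egen n N k) a c := by
  -- the extra term `c = a` vanishes since `(λ_a - λ_a)⁻¹ = 0`
  rw [dynA, diagOp, Finset.sum_filter_of_ne]
  · simp only [pairOp, smul_smul, div_eq_inv_mul]
  · intro c _ h hca
    rw [hca, sub_self, div_zero, zero_smul] at h
    exact h rfl

end Glnm

open Glnm in
theorem dynamical_flatness_general (n m k : ℕ)
    (z : Fin k → ℂ) (lam : Fin (n + m) → ℂ)
    (hlam : ∀ a b : Fin (n + m), a ≠ b → lam a ≠ lam b)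
    (a b : Fin (n + m)) :
    comm (dynA n (n + m) k z lam a) (dynA n (n + m) k z lam b) = 0 := by
  have he := isKoszulUnits_eop n (n + m) k
  have hX : IsInfBraid (pairOp (par n (n + m)) (Egen n (n + m) k)) :=
    he.isSuperGl_sum.isInfBraid_pairOp
  have hlam' : Function.Injective lam := fun a b h => by_contra fun hab => hlam a b hab h
  rw [Glnm.comm, ← Ring.lie_def, ← commute_iff_lie_eq, dynA_eq, dynA_eq]
  exact hX.commute_add_gaudin hlam' (he.commute_diagOp z) (he.commute_diagOp_pairOp z)
    (he.commute_diagOp_add_pairOp z) a b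

open Glnm in
/-- Theorem 1, first part: the dynamical connection matrices
commute pairwise, `[A_a, A_b] = 0`. -/
theorem dynamical_flatness (n m k : ℕ) (hk : 1 ≤ k)
    (z : Fin k → ℂ) (lam : Fin (n + m) → ℂ)
    (hlam : ∀ a b : Fin (n + m), a ≠ b → lam a ≠ lam b)
    (a b : Fin (n + m)) :
    comm (dynA n (n + m) k z lam a) (dynA n (n + m) k z lam b) = 0 :=
  dynamical_flatness_general n m k z lam hlam a b
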